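/- arXiv:1302.6668 — 4 statements merged into one kernel-verified Lean document; each statement's English description precedes it below -/
import Mathlib

section
/- Suppose G is a directed graph on vertex set V = {1,…,n} that is not strongly connected. Then there is no finite sequence A_1, …, A_T of row-stochastic matrices with positive diagonals, each consistent with G, such that the product A_T ⋯ A_1 is a rank-one stochastic matrix of the form 𝟙 v^T. (Strong connectivity is necessary for finite-time consensus.) -/
open Matrix Finset

def IsStochastic {n : ℕ} (A : Matrix (Fin n) (Fin n) ℝ) : Prop :=
  (∀ i j, 0 ≤ A i j) ∧ ∀ i, ∑ j, A i j = 1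

def PosDiag {n : ℕ} (A : Matrix (Fin n) (Fin n) ℝ) : Prop := ∀ i, 0 < A i i

/-- `A` is consistent with the directed graph `G`: an off-diagonal entry `A i j`
may be positive only if `(j, i)` is an arc of `G`. -/
def Consistent {n : ℕ} (G : Fin n → Fin n → Prop) (A : Matrix (Fin n) (Fin n) ℝ) : Prop :=
  ∀ i j, i ≠ j → 0 < A i j → G j i

/-!
A product `P` of nonnegative matrices with positive diagonals keeps a positive diagonal, and
`P a b > 0` only if the graph has a walk from `b` to `a`. If `P = 𝟙 vᵀ`, then `v i = P i i > 0`
for every `i`, so every entry `P j i = v i` is positive and every `i` reaches every `j`.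
-/

namespace Matrix

variable {ι R : Type*} [Fintype ι] [Semiring R] [LinearOrder R] [IsStrictOrderedRing R]

theorem exists_pos_of_mul_apply_pos {A B : Matrix ι ι R} (hA : ∀ i j, 0 ≤ A i j)
    (hB : ∀ i j, 0 ≤ B i j) {i j : ι} (h : 0 < (A * B) i j) :
    ∃ k, 0 < A i k ∧ 0 < B k j := by
  obtain ⟨k, -, hk⟩ := exists_lt_of_sum_lt (s := univ) (f := fun _ => (0 : R))
    (by simpa [mul_apply] using h)
  exact ⟨k, pos_of_mul_pos_left hk (hB k j), pos_of_mul_pos_right hk (hA i k)⟩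

variable [DecidableEq ι]

theorem list_prod_apply_nonneg {L : List (Matrix ι ι R)} (hL : ∀ A ∈ L, ∀ i j, 0 ≤ A i j)
    (i j : ι) : 0 ≤ L.prod i j := by
  induction L generalizing i j with
  | nil => by_cases h : i = j <;> simp [h]
  | cons A L ih =>
    rw [List.prod_cons, mul_apply]
    exact sum_nonneg fun k _ => mul_nonneg (hL A List.mem_cons_self i k)
      (ih (fun B hB => hL B (List.mem_cons_of_mem _ hB)) k j)

theorem list_prod_apply_self_pos {L : List (Matrix ι ι R)} (hL : ∀ A ∈ L, ∀ i j, 0 ≤ A i j)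
    (hdiag : ∀ A ∈ L, ∀ i, 0 < A i i) (i : ι) : 0 < L.prod i i := by
  induction L with
  | nil => simp
  | cons A L ih =>
    have hL' : ∀ B ∈ L, ∀ i j, 0 ≤ B i j := fun B hB => hL B (List.mem_cons_of_mem _ hB)
    rw [List.prod_cons, mul_apply]
    exact sum_pos' (fun k _ => mul_nonneg (hL A List.mem_cons_self i k)
        (list_prod_apply_nonneg hL' k i))
      ⟨i, mem_univ i, mul_pos (hdiag A List.mem_cons_self i)
        (ih hL' fun B hB => hdiag B (List.mem_cons_of_mem _ hB))⟩

theorem reflTransGen_of_list_prod_apply_pos (G : ι → ι → Prop) {L : List (Matrix ι ι R)}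
    (hL : ∀ A ∈ L, ∀ i j, 0 ≤ A i j) (hG : ∀ A ∈ L, ∀ i j, i ≠ j → 0 < A i j → G j i)
    {i j : ι} (h : 0 < L.prod i j) : Relation.ReflTransGen G j i := by
  induction L generalizing i with
  | nil =>
    by_cases hij : i = j
    · exact hij ▸ Relation.ReflTransGen.refl
    · simp [hij] at h
  | cons A L ih =>
    have hL' : ∀ B ∈ L, ∀ i j, 0 ≤ B i j := fun B hB => hL B (List.mem_cons_of_mem _ hB)
    rw [List.prod_cons] at h
    obtain ⟨k, hik, hkj⟩ :=
      exists_pos_of_mul_apply_pos (hL A List.mem_cons_self) (list_prod_apply_nonneg hL') h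
    have hjk := ih hL' (fun B hB => hG B (List.mem_cons_of_mem _ hB)) hkj
    by_cases hki : i = k
    · exact hki ▸ hjk
    · exact hjk.tail (hG A List.mem_cons_self i k hki hik)

end Matrix

theorem stmt_2 {n : ℕ} (G : Fin n → Fin n → Prop)
    (hG : ¬ ∀ i j : Fin n, Relation.ReflTransGen G i j) :
    ¬ ∃ L : List (Matrix (Fin n) (Fin n) ℝ),
        (∀ A ∈ L, IsStochastic A ∧ PosDiag A ∧ Consistent G A) ∧
        ∃ v : Fin n → ℝ, (∀ i, 0 ≤ v i) ∧ (∑ i, v i = 1) ∧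
          L.prod = Matrix.of (fun _ j => v j) := by
  simp only [not_forall] at hG
  obtain ⟨i, j, hij⟩ := hG
  rintro ⟨L, hL, v, -, -, hLv⟩
  have hnonneg : ∀ A ∈ L, ∀ i j, 0 ≤ A i j := fun A hA => (hL A hA).1.1
  have hvi : 0 < v i := by
    simpa [hLv] using list_prod_apply_self_pos hnonneg (fun A hA => (hL A hA).2.1) i
  have hji : 0 < L.prod j i := by simpa [hLv] using hvi
  exact hij (reflTransGen_of_list_prod_apply_pos G hnonneg (fun A hA => (hL A hA).2.2) hji)
end

section
/- Let C_n be the directed cycle graph on n vertices (edges (i, i−1) for i = 2,…,n and edge (1,n)) with n even, and let A be a row-stochastic matrix with positive diagonal consistent with C_n. Let x ∈ ℝ^n and y = Ax (indices mod n). If there exists i such that x_i and x_{i+1} are both ≥ 0 or both ≤ 0, then there exists j such that y_j and y_{j+1} are both ≥ 0 or both ≤ 0. -/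
/-!
Argue by contraposition, writing `0 ≤ a * b` for "`a` and `b` have the same weak sign".
Suppose `y = A x` alternates strictly in sign around the cycle. Each `y j` is a nonnegative
combination of `x j` and `x (j + 1)`, so `x j * y j ≤ 0` forces `x (j + 1) * y (j + 1) < 0`.
Going once around the cycle, the products `x j * y j` are therefore all positive or all
negative, and in both cases `x` alternates strictly as well.
-/

open Matrix Finset

/-- `A` is consistent with the directed cycle `C_n`: the only off-diagonal entry
of row `i` that may be positive is in column `i + 1` (mod `n`). -/
def CycleConsistent {n : ℕ} [NeZero n] (A : Matrix (Fin n) (Fin n) ℝ) : Prop :=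
  ∀ i j : Fin n, i ≠ j → 0 < A i j → j = i + 1

theorem Fin.forall_of_add_one_closed {n : ℕ} [NeZero n] {P : Fin n → Prop}
    (hstep : ∀ j, P j → P (j + 1)) {i : Fin n} (hi : P i) (j : Fin n) : P j := by
  open Fin.NatCast in
  have hP : ∀ k : ℕ, P (i + k) := by
    intro k
    induction k with
    | zero => simpa using hi
    | succ k ih => simpa [add_assoc] using hstep _ ih
  simpa using hP (j - i).val

theorem mul_mulVec_apply_nonpos {m ι R : Type*} [Fintype ι] [CommRing R] [LinearOrder R]
    [IsStrictOrderedRing R] {A : Matrix m ι R} {i : m} (hA : ∀ k, 0 ≤ A i k) (x : ι → R)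
    {c : R} (h : ∀ k, 0 < A i k → c * x k ≤ 0) : c * (A *ᵥ x) i ≤ 0 := by
  rw [mulVec, dotProduct, Finset.mul_sum]
  refine Finset.sum_nonpos fun k _ => ?_
  rcases (hA k).eq_or_lt with hz | hpos
  · simp [← hz]
  · calc c * (A i k * x k) = A i k * (c * x k) := by ring
      _ ≤ 0 := mul_nonpos_of_nonneg_of_nonpos hpos.le (h k hpos)

def StrictlyAlternating {n : ℕ} [NeZero n] (y : Fin n → ℝ) : Prop :=
  ∀ j, y j * y (j + 1) < 0

section Cycle

variable {n : ℕ} [NeZero n] {A : Matrix (Fin n) (Fin n) ℝ}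

theorem CycleConsistent.mul_mulVec_apply_nonpos (hC : CycleConsistent A)
    (hA : ∀ i j, 0 ≤ A i j) (x : Fin n → ℝ) {c : ℝ} {i : Fin n}
    (h₀ : c * x i ≤ 0) (h₁ : c * x (i + 1) ≤ 0) : c * (A *ᵥ x) i ≤ 0 :=
  _root_.mul_mulVec_apply_nonpos (hA i) x fun k hk => by
    obtain rfl | hne := eq_or_ne i k
    · exact h₀
    · rwa [hC i k hne hk]

theorem CycleConsistent.mul_mulVec_add_one_neg (hC : CycleConsistent A)
    (hA : ∀ i j, 0 ≤ A i j) {x : Fin n → ℝ} (halt : StrictlyAlternating (A *ᵥ x))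
    {j : Fin n} (hj : x j * (A *ᵥ x) j ≤ 0) : x (j + 1) * (A *ᵥ x) (j + 1) < 0 := by
  set y := A *ᵥ x
  have hyj : y j ≠ 0 := fun h0 => by simpa [h0] using halt j
  have hnext : 0 < y j * x (j + 1) := by
    by_contra! hle
    exact (mul_self_pos.mpr hyj).not_ge
      (hC.mul_mulVec_apply_nonpos hA x (by linarith) hle)
  nlinarith [halt j, mul_self_pos.mpr hyj]

theorem CycleConsistent.strictlyAlternating_of_mulVec (hC : CycleConsistent A)
    (hA : ∀ i j, 0 ≤ A i j) {x : Fin n → ℝ} (halt : StrictlyAlternating (A *ᵥ x)) :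
    StrictlyAlternating x := by
  set y := A *ᵥ x
  have hsign : (∀ j, 0 < x j * y j) ∨ ∀ j, x j * y j < 0 := by
    by_cases hpos : ∀ j, 0 < x j * y j
    · exact .inl hpos
    push Not at hpos
    obtain ⟨i, hi⟩ := hpos
    have hnonpos := Fin.forall_of_add_one_closed (P := fun j => x j * y j ≤ 0)
      (fun j hj => (hC.mul_mulVec_add_one_neg hA halt hj).le) hi
    exact .inr fun j => by
      simpa using hC.mul_mulVec_add_one_neg hA halt (hnonpos (j - 1))
  intro j
  have hprod : 0 < (x j * y j) * (x (j + 1) * y (j + 1)) := by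
    rcases hsign with h | h
    · exact mul_pos (h j) (h (j + 1))
    · exact mul_pos_of_neg_of_neg (h j) (h (j + 1))
  nlinarith [halt j]

end Cycle

theorem stmt_4_general {n : ℕ} [NeZero n]
    (A : Matrix (Fin n) (Fin n) ℝ)
    (hA : IsStochastic A) (hC : CycleConsistent A)
    (x : Fin n → ℝ) (y : Fin n → ℝ) (hy : y = A.mulVec x)
    (h : ∃ i : Fin n, (0 ≤ x i ∧ 0 ≤ x (i + 1)) ∨ (x i ≤ 0 ∧ x (i + 1) ≤ 0)) :
    ∃ j : Fin n, (0 ≤ y j ∧ 0 ≤ y (j + 1)) ∨ (y j ≤ 0 ∧ y (j + 1) ≤ 0) := by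
  simp only [← mul_nonneg_iff] at h ⊢
  by_contra! hy_alt
  subst hy
  obtain ⟨i, hi⟩ := h
  exact (hC.strictlyAlternating_of_mulVec hA.1 hy_alt i).not_ge hi

theorem stmt_4 {n : ℕ} [NeZero n] (hn : Even n)
    (A : Matrix (Fin n) (Fin n) ℝ)
    (hA : IsStochastic A) (hD : PosDiag A) (hC : CycleConsistent A)
    (x : Fin n → ℝ) (y : Fin n → ℝ) (hy : y = A.mulVec x)
    (h : ∃ i : Fin n, (0 ≤ x i ∧ 0 ≤ x (i + 1)) ∨ (x i ≤ 0 ∧ x (i + 1) ≤ 0)) :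
    ∃ j : Fin n, (0 ≤ y j ∧ 0 ≤ y (j + 1)) ∨ (y j ≤ 0 ∧ y (j + 1) ≤ 0) :=
  stmt_4_general A hA hC x y hy h
end

section
/- If a directed graph G on n vertices contains a bidirectional spanning tree (i.e., there is an undirected spanning tree each of whose edges occurs in both directions in G), then there exists a finite sequence of at most n(n−1)/2 row-stochastic matrices with positive diagonals, each consistent with G, whose product equals (1/n)·𝟙𝟙^T. (Finite-time average consensus is achievable.) -/
/-!
Induct on a connected vertex set `S` carrying positive weights `w` with sum one, removing a vertex
`z` that leaves `S \ {z}` connected. First bring `S \ {z}` to consensus on the renormalised weights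
`w / (1 - w z)`, leaving `z` untouched. Then `#S - 1` averaging steps along edges spread the value
of `z` so that every vertex of `S` ends up with the share `w z` of it, the rest being the common
value: this is exactly the `w`-average. In total this takes `(#S).choose 2` steps.

Spreading is again an induction, peeling a vertex `z' ≠ z` whose removal keeps `S` connected, with
a neighbour `p`: if `p` already holds a share of the value of `z` larger than the shares wanted at
`z'` and at `p`, one step on the edge `z'p` splits it into exactly those shares (positive
diagonals rule out simply copying a value). In a product `A₁ ⋯ Aₘ` applied to a vector of values,
`Aₘ` acts first.
-/

open Matrix Finset

namespace SimpleGraph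

variable {V : Type*} [DecidableEq V] {H : SimpleGraph V}

theorem exists_adj_connected_induce_erase {S : Finset V}
    (hS : (H.induce (S : Set V)).Connected) (hcard : 2 ≤ #S) (r : V) :
    ∃ z ∈ S, z ≠ r ∧ (∃ p ∈ S.erase z, H.Adj z p) ∧ (H.induce (S.erase z : Set V)).Connected := by
  classical
  have : Nontrivial (S : Set V) :=
    Set.nontrivial_coe_sort.mpr (one_lt_card_iff_nontrivial.mp hcard)
  obtain ⟨T, hTS, hT⟩ := hS.exists_isTree_le
  obtain ⟨z, hzT, hzr⟩ : ∃ z, T.degree z = 1 ∧ z.1 ≠ r := by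
    obtain ⟨u, w, huw, hu, hw⟩ := hT.exists_ne_and_degree_eq_one
    by_cases hur : u.1 = r
    · exact ⟨w, hw, fun hwr => huw (Subtype.ext (hur.trans hwr.symm))⟩
    · exact ⟨u, hu, hur⟩
  obtain ⟨p, hzp, -⟩ := degree_eq_one_iff_existsUnique_adj.mp hzT
  have hpz : p.1 ≠ z.1 := fun h => (hTS hzp).ne (Subtype.ext h.symm)
  refine ⟨z.1, z.2, hzr, ⟨p.1, mem_erase.mpr ⟨hpz, p.2⟩, hTS hzp⟩, ?_⟩
  have hconn : ((H.induce (S : Set V)).induce {z}ᶜ).Connected :=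
    (hT.connected.induce_compl_singleton_of_degree_eq_one hzT).mono fun _ _ h => hTS h
  refine hconn.map ⟨fun v => ⟨v.1.1, mem_erase.mpr ⟨fun h => v.2 (Subtype.ext h), v.1.2⟩⟩, id⟩ ?_
  rintro ⟨v, hv⟩
  obtain ⟨hvz, hvS⟩ := mem_erase.mp hv
  exact ⟨⟨⟨v, hvS⟩, fun h => hvz (congrArg Subtype.val h)⟩, rfl⟩

end SimpleGraph

namespace Matrix

variable {V R : Type*} [Fintype V] [DecidableEq V]

def supportedOn [Semiring R] (S : Finset V) : Submonoid (Matrix V V R) where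
  carrier := {M | ∀ i j, (i ∉ S ∨ j ∉ S) → M i j = (1 : Matrix V V R) i j}
  one_mem' _ _ _ := rfl
  mul_mem' {M N} hM hN i j hij := by
    by_cases hi : i ∈ S
    · have hj : j ∉ S := hij.resolve_left (not_not.mpr hi)
      rw [one_apply_ne (by rintro rfl; exact hj hi), mul_apply]
      refine sum_eq_zero fun k _ => ?_
      by_cases hk : k ∈ S
      · rw [hN k j (Or.inr hj), one_apply_ne (by rintro rfl; exact hj hk), mul_zero]
      · rw [hM i k (Or.inr hk), one_apply_ne (by rintro rfl; exact hk hi), zero_mul]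
    · have hrow : M i = (1 : Matrix V V R) i := funext fun k => hM i k (Or.inl hi)
      rw [mul_apply, ← hN i j (Or.inl hi)]
      simp [hrow, one_apply]

variable [Semiring R] {S S' : Finset V} {M : Matrix V V R}

theorem supportedOn_mono (h : S ⊆ S') : supportedOn (R := R) S ≤ supportedOn S' :=
  fun _ hM i j hij => hM i j (hij.imp (mt (@h i)) (mt (@h j)))

theorem apply_eq_zero_of_mem_supportedOn (hM : M ∈ supportedOn S) {i j : V} (hi : i ∈ S)
    (hj : j ∉ S) : M i j = 0 := by
  rw [hM i j (Or.inr hj), one_apply_ne (by rintro rfl; exact hj hi)]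

theorem sum_apply_mul_of_mem_supportedOn (hM : M ∈ supportedOn S) {i : V} (hi : i ∈ S)
    (f : V → R) : ∑ k ∈ S, M i k * f k = ∑ k, M i k * f k :=
  sum_subset (subset_univ S) fun k _ hk => by
    rw [apply_eq_zero_of_mem_supportedOn hM hi hk, zero_mul]

end Matrix

section EdgeOp

variable {V : Type*} [Fintype V] [DecidableEq V]

def edgeOp (z p : V) (a b : ℝ) : Matrix V V ℝ :=
  Matrix.of fun i =>
    if i = z then a • Pi.single z 1 + (1 - a) • Pi.single p 1
    else if i = p then b • Pi.single p 1 + (1 - b) • Pi.single z 1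
    else Pi.single i 1

variable {z p : V} {a b : ℝ}

theorem edgeOp_mul_row_left (M : Matrix V V ℝ) :
    (edgeOp z p a b * M) z = a • M z + (1 - a) • M p := by
  ext j
  simp [edgeOp, mul_apply, add_mul, sum_add_distrib, Pi.single_apply]

theorem edgeOp_mul_row_right (hzp : z ≠ p) (M : Matrix V V ℝ) :
    (edgeOp z p a b * M) p = b • M p + (1 - b) • M z := by
  ext j
  simp [edgeOp, mul_apply, add_mul, sum_add_distrib, Pi.single_apply, hzp.symm]

theorem edgeOp_mul_row_of_ne {i : V} (hiz : i ≠ z) (hip : i ≠ p) (M : Matrix V V ℝ) :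
    (edgeOp z p a b * M) i = M i := by
  ext j
  simp [edgeOp, mul_apply, Pi.single_apply, hiz, hip]

theorem edgeOp_mem_supportedOn {S : Finset V} (hz : z ∈ S) (hp : p ∈ S) :
    edgeOp z p a b ∈ Matrix.supportedOn S := by
  intro i j hij
  rcases hij with hi | hj
  · have hiz : i ≠ z := (ne_of_mem_of_not_mem hz hi).symm
    have hip : i ≠ p := (ne_of_mem_of_not_mem hp hi).symm
    simp [edgeOp, Pi.single_apply, one_apply, hiz, hip, eq_comm (a := j)]
  · have hjz : z ≠ j := ne_of_mem_of_not_mem hz hj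
    have hjp : p ≠ j := ne_of_mem_of_not_mem hp hj
    simp only [edgeOp, of_apply]
    split_ifs <;> subst_vars <;>
      simp [Pi.single_apply, one_apply, hjz, hjp, hjz.symm, hjp.symm, eq_comm (a := j)]

theorem edgeOp_mem_rowStochastic (ha : a ∈ Set.Icc 0 1) (hb : b ∈ Set.Icc 0 1) :
    edgeOp z p a b ∈ rowStochastic ℝ V := by
  obtain ⟨ha0, ha1⟩ := ha
  obtain ⟨hb0, hb1⟩ := hb
  refine mem_rowStochastic_iff_sum.mpr ⟨fun i j => ?_, fun i => ?_⟩
  · simp only [edgeOp, of_apply]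
    split_ifs <;> simp only [Pi.add_apply, Pi.smul_apply, Pi.single_apply, smul_eq_mul] <;>
      split_ifs <;> linarith
  · simp only [edgeOp, of_apply]
    split_ifs <;> simp [sum_add_distrib, Pi.single_apply]

end EdgeOp

section Admissible

variable {n : ℕ} {G : Fin n → Fin n → Prop}

def IsAdmissible (G : Fin n → Fin n → Prop) (S : Finset (Fin n))
    (A : Matrix (Fin n) (Fin n) ℝ) : Prop :=
  IsStochastic A ∧ PosDiag A ∧ Consistent G A ∧ A ∈ Matrix.supportedOn S

theorem IsAdmissible.mono {S S' : Finset (Fin n)} {A : Matrix (Fin n) (Fin n) ℝ}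
    (hA : IsAdmissible G S A) (h : S ⊆ S') : IsAdmissible G S' A :=
  ⟨hA.1, hA.2.1, hA.2.2.1, Matrix.supportedOn_mono h hA.2.2.2⟩

theorem IsAdmissible.list_prod_mem {S : Finset (Fin n)} {L : List (Matrix (Fin n) (Fin n) ℝ)}
    (hL : ∀ A ∈ L, IsAdmissible G S A) :
    L.prod ∈ rowStochastic ℝ (Fin n) ∧ L.prod ∈ Matrix.supportedOn S :=
  ⟨Submonoid.list_prod_mem _ fun A hA => mem_rowStochastic_iff_sum.mpr (hL A hA).1,
    Submonoid.list_prod_mem _ fun A hA => (hL A hA).2.2.2⟩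

theorem edgeOp_isAdmissible {S : Finset (Fin n)} {z p : Fin n} {a b : ℝ} (hzp : z ≠ p)
    (hz : z ∈ S) (hp : p ∈ S) (hGzp : G z p) (hGpz : G p z) (ha : a ∈ Set.Ioc 0 1)
    (hb : b ∈ Set.Ioc 0 1) : IsAdmissible G S (edgeOp z p a b) := by
  refine ⟨mem_rowStochastic_iff_sum.mp (edgeOp_mem_rowStochastic (Set.Ioc_subset_Icc_self ha)
    (Set.Ioc_subset_Icc_self hb)), fun i => ?_, fun i j hij hpos => ?_,
    edgeOp_mem_supportedOn hz hp⟩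
  · simp only [edgeOp, of_apply]
    split_ifs with h1 h2
    · simp [h1, hzp.symm, ha.1]
    · simp [h2, hzp, hb.1]
    · simp
  · simp only [edgeOp, of_apply] at hpos
    split_ifs at hpos with h1 h2
    · subst h1
      by_cases hjp : j = p
      · exact hjp ▸ hGpz
      · simp [hij.symm, hjp] at hpos
    · subst h2
      by_cases hjz : j = z
      · exact hjz ▸ hGzp
      · simp [hij.symm, hjz] at hpos
    · simp [hij.symm] at hpos

end Admissible

section Steps

variable {V : Type*} [Fintype V] [DecidableEq V] {S : Finset V} {z : V}

theorem edgeOp_mul_apply_eq_of_apply_eq_update {p src : V} (hp : p ∈ S.erase z)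
    (hsrc : src ∈ S.erase z) {B : Matrix V V ℝ} (hB : B ∈ Matrix.supportedOn (S.erase z))
    {γ : V → ℝ} {g : ℝ} (hg : g ≠ 0) (hcol : ∀ v ∈ S.erase z, B v src = Function.update γ p g v)
    {v : V} (hv : v ∈ S) : (edgeOp z p (1 - γ z / g) (γ p / g) * B) v src = γ v := by
  have hzp : z ≠ p := (ne_of_mem_erase hp).symm
  have hBz : B z src = 0 := by
    rw [hB z src (Or.inl (notMem_erase z S)), one_apply_ne (ne_of_mem_erase hsrc).symm]
  have hBp : B p src = g := by rw [hcol p hp, Function.update_self]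
  by_cases hvz : v = z
  · subst hvz
    rw [edgeOp_mul_row_left]
    simp [hBz, hBp, hg]
  by_cases hvp : v = p
  · subst hvp
    rw [edgeOp_mul_row_right hzp]
    simp [hBz, hBp, hg]
  · rw [edgeOp_mul_row_of_ne hvz hvp, hcol v (mem_erase.mpr ⟨hvz, hv⟩),
      Function.update_of_ne hvp]

variable {B P : Matrix V V ℝ} (hB : B ∈ rowStochastic ℝ V) (hBS : B ∈ Matrix.supportedOn S)
  (hP : P ∈ Matrix.supportedOn (S.erase z))
include hP

theorem mul_apply_eq_apply_of_mem_supportedOn_erase (v : V) : (B * P) v z = B v z := by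
  have hPz : ∀ u, P u z = (1 : Matrix V V ℝ) u z := fun u => hP u z (Or.inr (notMem_erase z S))
  simp [mul_apply, hPz, one_apply]

include hB hBS in
theorem mul_apply_eq_of_rows_eq {μ : V → ℝ}
    (hPμ : ∀ u ∈ S.erase z, ∀ j ∈ S.erase z, P u j = μ j) (hz : z ∈ S) {v j : V} (hv : v ∈ S)
    (hj : j ∈ S.erase z) :
    (B * P) v j = (1 - B v z) * μ j := by
  have hPzj : P z j = 0 := by
    rw [hP z j (Or.inl (notMem_erase z S)), one_apply_ne (ne_of_mem_erase hj).symm]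
  have hrow : B v z + ∑ u ∈ S.erase z, B v u = 1 := by
    have h := Matrix.sum_apply_mul_of_mem_supportedOn hBS hv fun _ => (1 : ℝ)
    simp only [mul_one] at h
    rw [add_sum_erase S _ hz, h, sum_row_of_mem_rowStochastic hB v]
  rw [mul_apply, ← Matrix.sum_apply_mul_of_mem_supportedOn hBS hv, ← add_sum_erase S _ hz, hPzj,
    mul_zero, zero_add, sum_congr rfl fun u hu => by rw [hPμ u hu j hj], ← sum_mul]
  congr 1
  linarith

include hB hBS in
theorem mul_apply_eq_of_col_eq_of_rows_eq {w : V → ℝ} (hwz : 1 - w z ≠ 0)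
    (hBz : ∀ v ∈ S, B v z = w z)
    (hPw : ∀ u ∈ S.erase z, ∀ j ∈ S.erase z, P u j = w j / (1 - w z)) (hz : z ∈ S) {v j : V}
    (hv : v ∈ S) (hj : j ∈ S) : (B * P) v j = w j := by
  by_cases hjz : j = z
  · rw [hjz, mul_apply_eq_apply_of_mem_supportedOn_erase hP, hBz v hv]
  · rw [mul_apply_eq_of_rows_eq hB hBS hP hPw hz hv (mem_erase.mpr ⟨hjz, hj⟩), hBz v hv]
    field_simp

end Steps

section Construction

variable {n : ℕ} {G : Fin n → Fin n → Prop} {H : SimpleGraph (Fin n)}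

theorem isAdmissible_cons_edgeOp_and_prod_apply (hHG : ∀ i j, H.Adj i j → G i j)
    {S : Finset (Fin n)} {z p src : Fin n} (hz : z ∈ S) (hp : p ∈ S.erase z) (hzp : H.Adj z p)
    (hsrc : src ∈ S.erase z) {γ : Fin n → ℝ} (hγz : 0 < γ z) (hγp : 0 < γ p) {g : ℝ}
    (hgz : γ z < g) (hgp : γ p ≤ g) {L : List (Matrix (Fin n) (Fin n) ℝ)}
    (hL : ∀ A ∈ L, IsAdmissible G (S.erase z) A)
    (hcol : ∀ v ∈ S.erase z, L.prod v src = Function.update γ p g v) :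
    (∀ A ∈ edgeOp z p (1 - γ z / g) (γ p / g) :: L, IsAdmissible G S A) ∧
      ∀ v ∈ S, (edgeOp z p (1 - γ z / g) (γ p / g) :: L).prod v src = γ v := by
  have hg : 0 < g := hγz.trans hgz
  refine ⟨fun A hA => ?_, fun v hv => ?_⟩
  · rcases List.mem_cons.mp hA with rfl | hA
    · refine edgeOp_isAdmissible (ne_of_mem_erase hp).symm hz (mem_of_mem_erase hp)
        (hHG _ _ hzp) (hHG _ _ hzp.symm) ⟨?_, ?_⟩ ⟨div_pos hγp hg, (div_le_one hg).mpr hgp⟩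
      · linarith [(div_lt_one hg).mpr hgz]
      · linarith [div_pos hγz hg]
    · exact (hL A hA).mono (erase_subset z S)
  · rw [List.prod_cons]
    exact edgeOp_mul_apply_eq_of_apply_eq_update hp hsrc (IsAdmissible.list_prod_mem hL).2
      hg.ne' hcol hv

theorem exists_admissible_list_prod_col_eq (hHG : ∀ i j, H.Adj i j → G i j)
    {S : Finset (Fin n)} (hS : (H.induce (S : Set (Fin n))).Connected) (hcard : 2 ≤ #S)
    {src : Fin n} (hsrc : src ∈ S) {γ : Fin n → ℝ} (hγ : ∀ v ∈ S, γ v ∈ Set.Ioo 0 1) :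
    ∃ L : List (Matrix (Fin n) (Fin n) ℝ), L.length = #S - 1 ∧
      (∀ A ∈ L, IsAdmissible G S A) ∧ ∀ v ∈ S, L.prod v src = γ v := by
  induction hk : #S using Nat.strong_induction_on generalizing S γ with
  | _ k ih =>
  obtain ⟨z, hz, hzsrc, ⟨p, hp, hzp⟩, hS'⟩ :=
    SimpleGraph.exists_adj_connected_induce_erase hS hcard src
  have hsrc' : src ∈ S.erase z := mem_erase.mpr ⟨hzsrc.symm, hsrc⟩
  have hcard' : #(S.erase z) = k - 1 := by rw [card_erase_of_mem hz, hk]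
  obtain ⟨hγz, hγz1⟩ := hγ z hz
  obtain ⟨hγp, hγp1⟩ := hγ p (mem_of_mem_erase hp)
  obtain ⟨g, hgmax, L', hlen', hadm', hcol'⟩ : ∃ g, max (γ z) (γ p) < g ∧
      ∃ L' : List (Matrix (Fin n) (Fin n) ℝ), L'.length = k - 2 ∧
        (∀ A ∈ L', IsAdmissible G (S.erase z) A) ∧
        ∀ v ∈ S.erase z, L'.prod v src = Function.update γ p g v := by
    by_cases hk2 : k = 2
    · have hpsrc : p = src := card_le_one.mp (by omega) p hp src hsrc'
      refine ⟨1, max_lt hγz1 hγp1, [], by simp [hk2], by simp, fun v hv => ?_⟩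
      rw [card_le_one.mp (by omega) v hv src hsrc', ← hpsrc]
      simp
    · obtain ⟨g, hg⟩ := exists_between (max_lt hγz1 hγp1)
      have hγ' : ∀ v ∈ S.erase z, Function.update γ p g v ∈ Set.Ioo 0 1 := by
        intro v hv
        by_cases hvp : v = p
        · rw [hvp, Function.update_self]
          exact ⟨hγp.trans ((le_max_right _ _).trans_lt hg.1), hg.2⟩
        · rw [Function.update_of_ne hvp]
          exact hγ v (mem_of_mem_erase hv)
      obtain ⟨L', hlen', hadm', hcol'⟩ := ih (k - 1) (by omega) hS' (by omega) hsrc' hγ' hcard'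
      exact ⟨g, hg.1, L', by omega, hadm', hcol'⟩
  obtain ⟨hgz, hgp⟩ := max_lt_iff.mp hgmax
  exact ⟨_, by simp only [List.length_cons, hlen']; omega,
    isAdmissible_cons_edgeOp_and_prod_apply hHG hz hp hzp hsrc' hγz hγp hgz hgp.le hadm' hcol'⟩

theorem exists_admissible_list_prod_row_eq (hHG : ∀ i j, H.Adj i j → G i j)
    {S : Finset (Fin n)} (hS : (H.induce (S : Set (Fin n))).Connected) {w : Fin n → ℝ}
    (hw : ∀ v ∈ S, 0 < w v) (hsum : ∑ v ∈ S, w v = 1) :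
    ∃ L : List (Matrix (Fin n) (Fin n) ℝ), L.length = (#S).choose 2 ∧
      (∀ A ∈ L, IsAdmissible G S A) ∧ ∀ v ∈ S, ∀ j ∈ S, L.prod v j = w j := by
  induction hk : #S using Nat.strong_induction_on generalizing S w with
  | _ k ih =>
  by_cases hk1 : k ≤ 1
  · refine ⟨[], by simp [Nat.choose_eq_zero_of_lt (show k < 2 by omega)], by simp,
      fun v hv j hj => ?_⟩
    obtain rfl := card_le_one.mp (by omega) v hv j hj
    rw [(eq_singleton_iff_unique_mem.mpr ⟨hv, fun u hu => card_le_one.mp (by omega) u hu v hv⟩),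
      sum_singleton] at hsum
    simp [hsum]
  obtain ⟨⟨r, -⟩⟩ := hS.nonempty
  obtain ⟨z, hz, -, ⟨p, hp, -⟩, hS'⟩ :=
    SimpleGraph.exists_adj_connected_induce_erase hS (by omega) r
  have hrest : ∑ v ∈ S.erase z, w v = 1 - w z := by rw [← hsum, ← add_sum_erase S w hz]; ring
  have hwz1 : 0 < 1 - w z :=
    hrest ▸ sum_pos (fun v hv => hw v (mem_of_mem_erase hv)) ⟨p, hp⟩
  obtain ⟨LP, hlenP, hadmP, hrowP⟩ := ih (k - 1) (by omega) hS' (w := fun j => w j / (1 - w z))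
    (fun v hv => div_pos (hw v (mem_of_mem_erase hv)) hwz1)
    (by rw [← sum_div, hrest, div_self hwz1.ne']) (by rw [card_erase_of_mem hz, hk])
  obtain ⟨LB, hlenB, hadmB, hcolB⟩ := exists_admissible_list_prod_col_eq hHG hS (by omega) hz
    (γ := fun _ => w z) fun _ _ => ⟨hw z hz, by linarith⟩
  obtain ⟨hB, hBS⟩ := IsAdmissible.list_prod_mem hadmB
  have hP := (IsAdmissible.list_prod_mem hadmP).2
  refine ⟨LB ++ LP, ?_, ?_, fun v hv j hj => ?_⟩
  · obtain ⟨m, rfl⟩ : ∃ m, k = m + 1 := ⟨k - 1, by omega⟩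
    rw [List.length_append, hlenB, hlenP, hk, Nat.add_sub_cancel, Nat.choose_succ_succ',
      Nat.choose_one_right, add_comm]
  · intro A hA
    rcases List.mem_append.mp hA with hA | hA
    · exact hadmB A hA
    · exact (hadmP A hA).mono (erase_subset z S)
  rw [List.prod_append]
  exact mul_apply_eq_of_col_eq_of_rows_eq hB hBS hP hwz1.ne' hcolB hrowP hz hv hj

end Construction

theorem stmt_6 {n : ℕ} [NeZero n] (G : Fin n → Fin n → Prop)
    (T : SimpleGraph (Fin n)) (hT : T.IsTree)
    (hTG : ∀ i j : Fin n, T.Adj i j → G i j) :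
    ∃ L : List (Matrix (Fin n) (Fin n) ℝ),
      L.length ≤ n * (n - 1) / 2 ∧
      (∀ A ∈ L, IsStochastic A ∧ PosDiag A ∧ Consistent G A) ∧
      L.prod = Matrix.of (fun _ _ => (1 : ℝ) / n) := by
  have hconn : (T.induce ((univ : Finset (Fin n)) : Set (Fin n))).Connected := by
    rw [coe_univ]
    exact (SimpleGraph.induceUnivIso T).connected_iff.mpr hT.connected
  obtain ⟨L, hlen, hadm, hrow⟩ := exists_admissible_list_prod_row_eq hTG hconn
    (w := fun _ => 1 / n) (fun _ _ => by simp [Nat.pos_of_neZero]) (by simp)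
  refine ⟨L, by simp [hlen, Nat.choose_two_right], fun A hA => ?_, ?_⟩
  · obtain ⟨hst, hpos, hcons, -⟩ := hadm A hA
    exact ⟨hst, hpos, hcons⟩
  · ext i j
    simpa using hrow i (mem_univ i) j (mem_univ j)
end

section
/- Let n be even and C_n the directed n-cycle. If x ∈ ℝ^n has two cyclically consecutive coordinates weakly on the same side of some value c ∈ ℝ (i.e., x_i − c and x_{i+1} − c are both ≥ 0 or both ≤ 0 for some i), then for any finite sequence A_1,…,A_T of row-stochastic matrices with positive diagonals consistent with C_n, the vector x(T) = A_T⋯A_1 x also has two cyclically consecutive coordinates weakly on the same side of c. -/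
open Matrix Finset

/-!
Write `u = y - c` and `v = A y - c`. Each `v j` is a combination of `u j` and `u (j+1)` with a
positive weight on `u j`, so if `v j ≠ 0` is not weakly on the side of `u j`, it is strictly on the
side of `u (j+1)`. If `v` alternated strictly around the cycle, this would make "`u k` is not strictly
on the side of `v k`" propagate from `k` to `k + 1`, so `u k * v k` would have one strict sign for
all `k`; then `u i * u (i+1)` would have the strict sign of `v i * v (i+1) < 0`, contradicting the
hypothesis on `u`. For `n = 1` every vector trivially qualifies, and induction over the product
finishes the proof.
-/

def ConsecutiveSameSide {n : ℕ} [NeZero n] (c : ℝ) (x : Fin n → ℝ) : Prop :=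
  ∃ i : Fin n, 0 ≤ (x i - c) * (x (i + 1) - c)

open Fin.NatCast in
theorem Fin.forall_of_imp_add_one {n : ℕ} [NeZero n] {p : Fin n → Prop}
    (h : ∀ k, p k → p (k + 1)) {j : Fin n} (hj : p j) (k : Fin n) : p k := by
  have hshift : ∀ m : ℕ, p (j + m) := by
    intro m
    induction m with
    | zero => simpa using hj
    | succ m ih => simpa [add_assoc] using h _ ih
  simpa using hshift (k - j).val

theorem pos_mul_of_eq_add_of_mul_nonpos {a b u v w : ℝ} (ha : 0 < a) (hb : 0 ≤ b)
    (hv : v = a * u + b * w) (hv0 : v ≠ 0) (huv : u * v ≤ 0) : 0 < w * v := by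
  by_contra! hwv
  have hvv : v * v = a * (u * v) + b * (w * v) := by rw [hv]; ring
  nlinarith [mul_self_pos.mpr hv0, mul_nonpos_of_nonneg_of_nonpos ha.le huv,
    mul_nonpos_of_nonneg_of_nonpos hb hwv]

theorem IsStochastic.mulVec_sub_const {n : ℕ} {A : Matrix (Fin n) (Fin n) ℝ} (hA : IsStochastic A)
    (c : ℝ) (y : Fin n → ℝ) (j : Fin n) : (A *ᵥ y) j - c = (A *ᵥ fun k => y k - c) j := by
  simp [mulVec, dotProduct, mul_sub, sum_sub_distrib, ← sum_mul, hA.2 j]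

theorem CycleConsistent.mulVec_apply {n : ℕ} [NeZero n] {A : Matrix (Fin n) (Fin n) ℝ}
    (hA : CycleConsistent A) (hnonneg : ∀ i j, 0 ≤ A i j) (h1 : (1 : Fin n) ≠ 0)
    (y : Fin n → ℝ) (j : Fin n) : (A *ᵥ y) j = A j j * y j + A j (j + 1) * y (j + 1) := by
  refine Fintype.sum_eq_add j (j + 1) (left_ne_add.mpr h1) fun k ⟨hkj, hkj1⟩ => ?_
  have hzero : A j k = 0 :=
    (hnonneg j k).eq_or_lt.elim Eq.symm fun hpos => (hkj1 (hA j k (Ne.symm hkj) hpos)).elim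
  simp [hzero]

theorem ConsecutiveSameSide.mulVec {n : ℕ} [NeZero n] {c : ℝ} {A : Matrix (Fin n) (Fin n) ℝ}
    (hS : IsStochastic A) (hP : PosDiag A) (hC : CycleConsistent A) {y : Fin n → ℝ}
    (hy : ConsecutiveSameSide c y) : ConsecutiveSameSide c (A *ᵥ y) := by
  unfold ConsecutiveSameSide at hy ⊢
  by_cases h1 : (1 : Fin n) = 0
  · exact ⟨0, by simpa [h1] using mul_self_nonneg _⟩
  by_contra! halt
  obtain ⟨i, hi⟩ := hy
  set u : Fin n → ℝ := fun k => y k - c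
  set v : Fin n → ℝ := fun k => (A *ᵥ y) k - c
  have hv : ∀ j, v j = A j j * u j + A j (j + 1) * u (j + 1) := fun j =>
    (hS.mulVec_sub_const c y j).trans (hC.mulVec_apply hS.1 h1 u j)
  have hprop : ∀ j, u j * v j ≤ 0 → u (j + 1) * v (j + 1) < 0 := by
    intro j huv
    have hv0 : v j ≠ 0 := fun h0 => (halt j).ne' (by simp [v, h0])
    have hnext := pos_mul_of_eq_add_of_mul_nonpos (hP j) (hS.1 j (j + 1)) (hv j) hv0 huv
    nlinarith [halt j, mul_self_pos.mpr hv0]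
  have hsign : (∀ k, 0 < u k * v k) ∨ ∀ k, u k * v k < 0 := by
    by_cases hsome : ∃ j, u j * v j ≤ 0
    · obtain ⟨j, hj⟩ := hsome
      have hall := Fin.forall_of_imp_add_one (fun k hk => (hprop k hk).le) hj
      exact Or.inr fun k => by simpa using hprop (k - 1) (hall (k - 1))
    · exact Or.inl fun k => lt_of_not_ge fun hk => hsome ⟨k, hk⟩
  have hpos : 0 < (u i * v i) * (u (i + 1) * v (i + 1)) :=
    hsign.elim (fun h => mul_pos (h i) (h _)) (fun h => mul_pos_of_neg_of_neg (h i) (h _))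
  have hnonpos : (u i * u (i + 1)) * (v i * v (i + 1)) ≤ 0 :=
    mul_nonpos_of_nonneg_of_nonpos hi (halt i).le
  linarith [show (u i * v i) * (u (i + 1) * v (i + 1)) = (u i * u (i + 1)) * (v i * v (i + 1)) by ring]

theorem stmt_16_general {n : ℕ} [NeZero n] (c : ℝ)
    (L : List (Matrix (Fin n) (Fin n) ℝ))
    (hL : ∀ A ∈ L, IsStochastic A ∧ PosDiag A ∧ CycleConsistent A)
    (x : Fin n → ℝ)
    (hx : ∃ i : Fin n, 0 ≤ (x i - c) * (x (i + 1) - c)) :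
    ∃ j : Fin n,
      0 ≤ (L.prod.mulVec x j - c) * (L.prod.mulVec x (j + 1) - c) := by
  induction L with
  | nil => simpa using hx
  | cons A L ih =>
    obtain ⟨hS, hP, hC⟩ := hL A List.mem_cons_self
    rw [List.prod_cons, ← mulVec_mulVec]
    exact ConsecutiveSameSide.mulVec hS hP hC (ih fun B hB => hL B (List.mem_cons_of_mem A hB))

theorem stmt_16 {n : ℕ} [NeZero n] (hn : Even n) (c : ℝ)
    (L : List (Matrix (Fin n) (Fin n) ℝ))
    (hL : ∀ A ∈ L, IsStochastic A ∧ PosDiag A ∧ CycleConsistent A)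
    (x : Fin n → ℝ)
    (hx : ∃ i : Fin n, 0 ≤ (x i - c) * (x (i + 1) - c)) :
    ∃ j : Fin n,
      0 ≤ (L.prod.mulVec x j - c) * (L.prod.mulVec x (j + 1) - c) :=
  stmt_16_general c L hL x hx
end
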